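/- arXiv:1903.02813 — 2 statements merged into one kernel-verified Lean document; each statement's English description precedes it below -/
import Mathlib

section
/- Let p be a real pyramid, J = [a,b) a real interval, and D(p) the set of discontinuity points of p. Then p + 1_J is a real pyramid if and only if exactly one of the following holds: (1) 0 < a, a ∈ D(p) and b ∉ D(p); (2) a ≤ 0 < b, a ∉ D(p) and b ∉ D(p); (3) b ≤ 0, b ∈ D(p) and a ∉ D(p). -/
/-!
Write `jump p x = p x - p₋ x`. The jumps of a pyramid lie in `{-1, 0, 1}`, are `≥ 0` on
`(-∞, 0]` and `≤ 0` on `(0, ∞)`, and `p` is continuous exactly where its jump vanishes.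
Adding `1_{[a,b)}` raises the jump at `a` by one, lowers the jump at `b` by one and leaves all
other jumps alone, so the constraints on jumps force `jump p a = -1` or `0` according as
`0 < a` or not, and `jump p b = 1` or `0` according as `b ≤ 0` or not. Conversely these values
also keep `p + 1_{[a,b)}` unimodal: if `b ≤ 0`, then `p ≤ p₋ b = p b - 1` on `(-∞, b)`, and
symmetrically if `0 < a`.
-/
noncomputable section
open Function
open scoped Classical

/-- The `ℕ`-valued indicator function of the interval `[a, b)`. -/
def ind (a b : ℝ) : ℝ → ℕ := (Set.Ico a b).indicator fun _ => 1

/-- A real pyramid: a function `p : ℝ → ℕ` vanishing outside a bounded set, maximal at `0`,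
nondecreasing on `(-∞, 0]`, nonincreasing on `[0, ∞)`, right-continuous and piecewise
constant with finitely many discontinuities, and with jumps of size at most 1
(`p₋(x)` is the left limit of `p` at `x`). -/
def IsRealPyramid (p : ℝ → ℕ) : Prop :=
  (∃ M : ℝ, ∀ x : ℝ, M ≤ |x| → p x = 0) ∧
  (∀ x, p x ≤ p 0) ∧
  (∀ ⦃x y : ℝ⦄, x ≤ y → y ≤ 0 → p x ≤ p y) ∧
  (∀ ⦃x y : ℝ⦄, 0 ≤ x → x ≤ y → p y ≤ p x) ∧
  (∀ x, ContinuousWithinAt p (Set.Ici x) x) ∧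
  {x : ℝ | ¬ ContinuousAt p x}.Finite ∧
  (∀ x, |(p x : ℤ) - ((Function.leftLim p x : ℕ) : ℤ)| ≤ 1)

/-- The interval `[a, b)` is addable for `p` if `p + 1_{[a,b)}` is again a real pyramid. -/
def Addable (p : ℝ → ℕ) (a b : ℝ) : Prop := IsRealPyramid (fun x => p x + ind a b x)

/-- The interval `[a, b)` is removable for `p` if `p ≥ 1` on `[a, b)` and `p − 1_{[a,b)}`
is again a real pyramid. -/
def Removable (p : ℝ → ℕ) (a b : ℝ) : Prop :=
  (∀ x ∈ Set.Ico a b, 1 ≤ p x) ∧ IsRealPyramid (fun x => p x - ind a b x)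

/-- `n_J(p)`: `1` if `J = [a,b)` is addable for `p`, `−1` if removable, `0` otherwise. -/
def nJ (p : ℝ → ℕ) (a b : ℝ) : ℤ :=
  if Addable p a b then 1 else if Removable p a b then -1 else 0

open Filter Topology Set

section Clamp

variable {β : Type*} {f : ℝ → β} {c x : ℝ}

theorem eventuallyEq_comp_min_nhdsLT (hx : x ≤ c) : f =ᶠ[𝓝[<] x] fun y => f (min y c) :=
  eventually_nhdsWithin_of_forall fun y hy => by
    simp only [min_eq_left ((mem_Iio.1 hy).le.trans hx)]

theorem eventuallyEq_comp_max_nhdsLT (hx : c < x) : f =ᶠ[𝓝[<] x] fun y => f (max y c) := by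
  filter_upwards [Ioo_mem_nhdsLT hx] with y hy
  simp only [max_eq_left hy.1.le]

variable [Preorder β]

theorem MonotoneOn.monotone_min (hf : MonotoneOn f (Iic c)) : Monotone fun y => f (min y c) :=
  fun _ _ h => hf (min_le_right _ c) (min_le_right _ c) (min_le_min_right c h)

theorem AntitoneOn.antitone_max (hf : AntitoneOn f (Ici c)) : Antitone fun y => f (max y c) :=
  fun _ _ h => hf (le_max_right _ c) (le_max_right _ c) (max_le_max_right c h)

end Clamp

section LeftLim

variable {β : Type*} [ConditionallyCompleteLinearOrder β] [TopologicalSpace β] [OrderTopology β]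
  {f : ℝ → β} {c x y : ℝ}

theorem MonotoneOn.leftLim_eq_leftLim_min (hf : MonotoneOn f (Iic c)) (hx : x ≤ c) :
    leftLim f x = leftLim (fun y => f (min y c)) x :=
  leftLim_eq_of_tendsto <|
    (hf.monotone_min.tendsto_leftLim x).congr' (eventuallyEq_comp_min_nhdsLT hx).symm

theorem AntitoneOn.leftLim_eq_leftLim_max (hf : AntitoneOn f (Ici c)) (hx : c < x) :
    leftLim f x = leftLim (fun y => f (max y c)) x :=
  leftLim_eq_of_tendsto <|
    (hf.antitone_max.tendsto_leftLim x).congr' (eventuallyEq_comp_max_nhdsLT hx).symm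

theorem MonotoneOn.tendsto_leftLim (hf : MonotoneOn f (Iic c)) (hx : x ≤ c) :
    Tendsto f (𝓝[<] x) (𝓝 (leftLim f x)) := by
  rw [hf.leftLim_eq_leftLim_min hx]
  exact (hf.monotone_min.tendsto_leftLim x).congr' (eventuallyEq_comp_min_nhdsLT hx).symm

theorem MonotoneOn.leftLim_le_self (hf : MonotoneOn f (Iic c)) (hx : x ≤ c) :
    leftLim f x ≤ f x := by
  simpa [hf.leftLim_eq_leftLim_min hx, min_eq_left hx] using
    hf.monotone_min.leftLim_le (le_refl x)

theorem MonotoneOn.le_leftLim (hf : MonotoneOn f (Iic c)) (hx : x ≤ c) (hy : y < x) :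
    f y ≤ leftLim f x := by
  simpa [hf.leftLim_eq_leftLim_min hx, min_eq_left (hy.le.trans hx)] using
    hf.monotone_min.le_leftLim hy

theorem AntitoneOn.tendsto_leftLim (hf : AntitoneOn f (Ici c)) (hx : c < x) :
    Tendsto f (𝓝[<] x) (𝓝 (leftLim f x)) := by
  rw [hf.leftLim_eq_leftLim_max hx]
  exact (hf.antitone_max.tendsto_leftLim x).congr' (eventuallyEq_comp_max_nhdsLT hx).symm

theorem AntitoneOn.self_le_leftLim (hf : AntitoneOn f (Ici c)) (hx : c < x) :
    f x ≤ leftLim f x := by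
  simpa [hf.leftLim_eq_leftLim_max hx, max_eq_left hx.le] using
    hf.antitone_max.le_leftLim (le_refl x)

theorem AntitoneOn.leftLim_le (hf : AntitoneOn f (Ici c)) (hy : c ≤ y) (hyx : y < x) :
    leftLim f x ≤ f y := by
  simpa [hf.leftLim_eq_leftLim_max (hy.trans_lt hyx), max_eq_left hy] using
    hf.antitone_max.leftLim_le hyx

end LeftLim

theorem continuousAt_iff_leftLim_eq {β : Type*} [TopologicalSpace β] [T2Space β] {f : ℝ → β}
    {x : ℝ} (hl : Tendsto f (𝓝[<] x) (𝓝 (leftLim f x))) (hr : ContinuousWithinAt f (Ici x) x) :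
    ContinuousAt f x ↔ leftLim f x = f x := by
  rw [continuousAt_iff_continuous_left_right, ← continuousWithinAt_Iio_iff_Iic]
  exact ⟨fun h => tendsto_nhds_unique hl h.1, fun h => ⟨by rwa [h] at hl, hr⟩⟩

section OrderTopology

variable {α : Type*} [LinearOrder α] [TopologicalSpace α] [OrderTopology α] (a b x : α)

theorem eventually_le_iff_nhdsGE : ∀ᶠ y in 𝓝[≥] x, (a ≤ y ↔ a ≤ x) := by
  rcases le_or_gt a x with h | h
  · filter_upwards [self_mem_nhdsWithin] with y (hy : x ≤ y) using iff_of_true (h.trans hy) h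
  · filter_upwards [nhdsWithin_le_nhds (eventually_lt_nhds h)] with y hy
      using iff_of_false hy.not_ge h.not_ge

theorem eventually_lt_iff_nhdsGE : ∀ᶠ y in 𝓝[≥] x, (y < b ↔ x < b) := by
  rcases lt_or_ge x b with h | h
  · filter_upwards [nhdsWithin_le_nhds (eventually_lt_nhds h)] with y hy using iff_of_true hy h
  · filter_upwards [self_mem_nhdsWithin] with y (hy : x ≤ y)
      using iff_of_false (h.trans hy).not_gt h.not_gt

theorem eventually_le_iff_nhdsLT : ∀ᶠ y in 𝓝[<] x, (a ≤ y ↔ a < x) := by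
  rcases lt_or_ge a x with h | h
  · filter_upwards [nhdsWithin_le_nhds (eventually_gt_nhds h)] with y hy
      using iff_of_true hy.le h
  · filter_upwards [self_mem_nhdsWithin] with y (hy : y < x)
      using iff_of_false (hy.trans_le h).not_ge h.not_gt

theorem eventually_lt_iff_nhdsLT : ∀ᶠ y in 𝓝[<] x, (y < b ↔ x ≤ b) := by
  rcases le_or_gt x b with h | h
  · filter_upwards [self_mem_nhdsWithin] with y (hy : y < x) using iff_of_true (hy.trans_le h) h
  · filter_upwards [nhdsWithin_le_nhds (eventually_gt_nhds h)] with y hy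
      using iff_of_false hy.not_gt h.not_ge

end OrderTopology

section Indicator

variable {a b x : ℝ}

@[simp]
theorem ind_of_mem (h : x ∈ Ico a b) : ind a b x = 1 := indicator_of_mem h _

@[simp]
theorem ind_of_notMem (h : x ∉ Ico a b) : ind a b x = 0 := indicator_of_notMem h _

theorem continuousAt_ind (hab : a < b) (hx : x ∉ ({a, b} : Set ℝ)) :
    ContinuousAt (ind a b) x :=
  continuousOn_const.continuousAt_indicator (by rwa [frontier_Ico hab])

variable (a b x)

theorem ind_eventuallyEq_nhdsGE : ind a b =ᶠ[𝓝[≥] x] fun _ => ind a b x := by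
  filter_upwards [eventually_le_iff_nhdsGE a x, eventually_lt_iff_nhdsGE b x] with y ha hb
  simp only [ind, indicator_apply, mem_Ico, ha, hb]

theorem ind_eventuallyEq_nhdsLT :
    ind a b =ᶠ[𝓝[<] x] fun _ => (Ioc a b).indicator (fun _ => 1) x := by
  filter_upwards [eventually_le_iff_nhdsLT a x, eventually_lt_iff_nhdsLT b x] with y ha hb
  simp only [ind, indicator_apply, mem_Ico, mem_Ioc, ha, hb]

end Indicator

def jump (f : ℝ → ℕ) (x : ℝ) : ℤ := f x - leftLim f x

namespace IsRealPyramid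

variable {p : ℝ → ℕ} {x : ℝ}

theorem monotoneOn (hp : IsRealPyramid p) : MonotoneOn p (Iic 0) :=
  fun _ _ _ hy hxy => hp.2.2.1 hxy hy

theorem antitoneOn (hp : IsRealPyramid p) : AntitoneOn p (Ici 0) :=
  fun _ hx _ _ hxy => hp.2.2.2.1 hx hxy

theorem tendsto_leftLim (hp : IsRealPyramid p) (x : ℝ) :
    Tendsto p (𝓝[<] x) (𝓝 (leftLim p x)) := by
  rcases le_or_gt x 0 with hx | hx
  exacts [hp.monotoneOn.tendsto_leftLim hx, hp.antitoneOn.tendsto_leftLim hx]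

theorem continuousAt_iff_jump_eq_zero (hp : IsRealPyramid p) (x : ℝ) :
    ContinuousAt p x ↔ jump p x = 0 := by
  rw [continuousAt_iff_leftLim_eq (hp.tendsto_leftLim x) (hp.2.2.2.2.1 x), jump]
  omega

theorem abs_jump_le_one (hp : IsRealPyramid p) (x : ℝ) : |jump p x| ≤ 1 := hp.2.2.2.2.2.2 x

theorem jump_nonneg (hp : IsRealPyramid p) (hx : x ≤ 0) : 0 ≤ jump p x := by
  have := hp.monotoneOn.leftLim_le_self hx
  rw [jump]
  omega

theorem jump_nonpos (hp : IsRealPyramid p) (hx : 0 < x) : jump p x ≤ 0 := by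
  have := hp.antitoneOn.self_le_leftLim hx
  rw [jump]
  omega

end IsRealPyramid

section AddInd

variable {p : ℝ → ℕ} {a b : ℝ}

theorem leftLim_add_ind (hp : IsRealPyramid p) (x : ℝ) :
    leftLim (fun y => p y + ind a b y) x = leftLim p x + (Ioc a b).indicator (fun _ => 1) x :=
  leftLim_eq_of_tendsto <|
    (hp.tendsto_leftLim x).add (tendsto_const_nhds.congr' (ind_eventuallyEq_nhdsLT a b x).symm)

theorem jump_add_ind_left (hp : IsRealPyramid p) (hab : a < b) :
    jump (fun y => p y + ind a b y) a = jump p a + 1 := by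
  rw [jump, jump, leftLim_add_ind hp, ind_of_mem (left_mem_Ico.2 hab),
    indicator_of_notMem (fun h => lt_irrefl a h.1)]
  push_cast
  ring

theorem jump_add_ind_right (hp : IsRealPyramid p) (hab : a < b) :
    jump (fun y => p y + ind a b y) b = jump p b - 1 := by
  rw [jump, jump, leftLim_add_ind hp, ind_of_notMem (fun h => lt_irrefl b h.2),
    indicator_of_mem (right_mem_Ioc.2 hab)]
  push_cast
  ring

theorem jump_add_ind_of_ne (hp : IsRealPyramid p) {x : ℝ} (ha : x ≠ a) (hb : x ≠ b) :
    jump (fun y => p y + ind a b y) x = jump p x := by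
  have : ind a b x = (Ioc a b).indicator (fun _ => 1) x := by
    simp only [ind, indicator_apply, mem_Ico, mem_Ioc, ha.symm.le_iff_lt, hb.le_iff_lt]
  simp [jump, leftLim_add_ind hp, this]

theorem monotoneOn_add_ind (hp : IsRealPyramid p) (hb : b ≤ 0 → jump p b = 1) :
    MonotoneOn (fun y => p y + ind a b y) (Iic 0) := by
  intro x _ y hy hxy
  by_cases hxJ : x ∈ Ico a b
  · by_cases hyJ : y ∈ Ico a b
    · simpa [hxJ, hyJ] using hp.monotoneOn (hxy.trans hy) hy hxy
    · have hby : b ≤ y := not_lt.1 fun h => hyJ ⟨hxJ.1.trans hxy, h⟩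
      have hb0 : b ≤ 0 := hby.trans hy
      have hjump := hb hb0
      have hxb := hp.monotoneOn.le_leftLim hb0 hxJ.2
      have hpb := hp.monotoneOn hb0 hy hby
      simp only [ind_of_mem hxJ, ind_of_notMem hyJ, jump] at hjump ⊢
      omega
  · simpa [hxJ] using (hp.monotoneOn (hxy.trans hy) hy hxy).trans (Nat.le_add_right _ _)

theorem antitoneOn_add_ind (hp : IsRealPyramid p) (ha : 0 < a → jump p a = -1) :
    AntitoneOn (fun y => p y + ind a b y) (Ici 0) := by
  intro x hx y _ hxy
  by_cases hyJ : y ∈ Ico a b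
  · by_cases hxJ : x ∈ Ico a b
    · simpa [hxJ, hyJ] using hp.antitoneOn hx (hx.trans hxy) hxy
    · have hxa : x < a := not_le.1 fun h => hxJ ⟨h, hxy.trans_lt hyJ.2⟩
      have ha0 : 0 < a := (mem_Ici.1 hx).trans_lt hxa
      have hjump := ha ha0
      have hax := hp.antitoneOn.leftLim_le hx hxa
      have hya := hp.antitoneOn ha0.le (ha0.le.trans hyJ.1) hyJ.1
      simp only [ind_of_mem hyJ, ind_of_notMem hxJ, jump] at hjump ⊢
      omega
  · simpa [hyJ] using (hp.antitoneOn hx (hx.trans hxy) hxy).trans (Nat.le_add_right _ _)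

theorem setOf_not_continuousAt_add_ind_subset (f : ℝ → ℕ) (hab : a < b) :
    {x | ¬ContinuousAt (fun y => f y + ind a b y) x} ⊆ {x | ¬ContinuousAt f x} ∪ {a, b} := by
  intro x hx
  by_contra hmem
  simp only [mem_union, mem_ofPred_eq, not_or, not_not] at hmem
  exact hx (hmem.1.add (continuousAt_ind hab hmem.2))

theorem add_ind_eq_zero_of_abs_ge {f : ℝ → ℕ} {M : ℝ} (hM : ∀ x, M ≤ |x| → f x = 0) (x : ℝ)
    (hx : max M (max |a| |b| + 1) ≤ |x|) : f x + ind a b x = 0 := by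
  have hxJ : x ∉ Ico a b := fun h => by
    linarith [abs_le_max_abs_abs h.1 h.2.le, le_max_right M (max |a| |b| + 1)]
  simp [hM x ((le_max_left _ _).trans hx), hxJ]

theorem abs_jump_add_ind_le_one (hp : IsRealPyramid p) (hab : a < b)
    (ha : jump p a = if 0 < a then -1 else 0) (hb : jump p b = if b ≤ 0 then 1 else 0) (x : ℝ) :
    |jump (fun y => p y + ind a b y) x| ≤ 1 := by
  rw [abs_le]
  by_cases hxa : x = a
  · subst hxa
    rw [jump_add_ind_left hp hab, ha]
    split_ifs <;> norm_num
  by_cases hxb : x = b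
  · subst hxb
    rw [jump_add_ind_right hp hab, hb]
    split_ifs <;> norm_num
  rw [jump_add_ind_of_ne hp hxa hxb, ← abs_le]
  exact hp.abs_jump_le_one x

theorem isRealPyramid_add_ind (hp : IsRealPyramid p) (hab : a < b)
    (ha : jump p a = if 0 < a then -1 else 0) (hb : jump p b = if b ≤ 0 then 1 else 0) :
    IsRealPyramid (fun x => p x + ind a b x) := by
  have hmono := monotoneOn_add_ind (a := a) (b := b) hp fun h => by simpa [h] using hb
  have hanti := antitoneOn_add_ind (a := a) (b := b) hp fun h => by simpa [h] using ha
  obtain ⟨M, hM⟩ := hp.1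
  refine ⟨⟨_, add_ind_eq_zero_of_abs_ge hM⟩, fun x => ?_,
    fun x y hxy hy => hmono (hxy.trans hy) hy hxy, fun x y hx hxy => hanti hx (hx.trans hxy) hxy,
    fun x => (hp.2.2.2.2.1 x).add
      (continuousWithinAt_const.congr_of_eventuallyEq (ind_eventuallyEq_nhdsGE a b x) rfl),
    (hp.2.2.2.2.2.1.union (toFinite _)).subset (setOf_not_continuousAt_add_ind_subset p hab),
    abs_jump_add_ind_le_one hp hab ha hb⟩
  rcases le_total x 0 with hx | hx
  exacts [hmono hx self_mem_Iic hx, hanti self_mem_Ici hx hx]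

theorem jump_eq_of_isRealPyramid_add_ind (hp : IsRealPyramid p) (hab : a < b)
    (hq : IsRealPyramid (fun x => p x + ind a b x)) :
    jump p a = (if 0 < a then -1 else 0) ∧ jump p b = if b ≤ 0 then 1 else 0 := by
  have hja := jump_add_ind_left hp hab
  have hjb := jump_add_ind_right hp hab
  have hpa := abs_le.1 (hp.abs_jump_le_one a)
  have hpb := abs_le.1 (hp.abs_jump_le_one b)
  have hqa := abs_le.1 (hq.abs_jump_le_one a)
  have hqb := abs_le.1 (hq.abs_jump_le_one b)
  constructor
  · split_ifs with ha
    · have := hq.jump_nonpos ha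
      omega
    · have := hp.jump_nonneg (not_lt.1 ha)
      omega
  · split_ifs with hb
    · have := hq.jump_nonneg hb
      omega
    · have := hp.jump_nonpos (not_le.1 hb)
      omega

theorem isRealPyramid_add_ind_iff (hp : IsRealPyramid p) (hab : a < b) :
    IsRealPyramid (fun x => p x + ind a b x) ↔
      jump p a = (if 0 < a then -1 else 0) ∧ jump p b = if b ≤ 0 then 1 else 0 :=
  ⟨jump_eq_of_isRealPyramid_add_ind hp hab, fun h => isRealPyramid_add_ind hp hab h.1 h.2⟩

end AddInd

/-- `p + 1_{[a,b)}` is a real pyramid iff exactly one of the three listed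
(mutually exclusive) conditions on the endpoints and the discontinuity set
`D(p) = {x | p is discontinuous at x}` holds. -/
theorem addable_iff (p : ℝ → ℕ) (hp : IsRealPyramid p) (a b : ℝ) (hab : a < b) :
    IsRealPyramid (fun x => p x + ind a b x) ↔
      ((0 < a ∧ ¬ ContinuousAt p a ∧ ContinuousAt p b) ∨
       (a ≤ 0 ∧ 0 < b ∧ ContinuousAt p a ∧ ContinuousAt p b) ∨
       (b ≤ 0 ∧ ¬ ContinuousAt p b ∧ ContinuousAt p a)) := by
  rw [isRealPyramid_add_ind_iff hp hab, hp.continuousAt_iff_jump_eq_zero,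
    hp.continuousAt_iff_jump_eq_zero]
  have hpa := abs_le.1 (hp.abs_jump_le_one a)
  have hpb := abs_le.1 (hp.abs_jump_le_one b)
  have ha_pos : 0 < a → jump p a ≤ 0 := hp.jump_nonpos
  have ha_nonpos : a ≤ 0 → 0 ≤ jump p a := hp.jump_nonneg
  have hb_pos : 0 < b → jump p b ≤ 0 := hp.jump_nonpos
  have hb_nonpos : b ≤ 0 → 0 ≤ jump p b := hp.jump_nonneg
  grind
end
end

section
/- For every real pyramid p and every real interval J, it is not the case that both p + 1_J is a real pyramid and (p ≥ 1 on J and p − 1_J is a real pyramid); that is, no interval is simultaneously addable and removable for p. -/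
noncomputable section
open Function
open scoped Classical

/-!
Let `J = [a, b)`. Both `p + 1_J` and `p - 1_J` agree with `p` to the left of `a`, so they have
the same left limit `c` at `a`, while their values at `a` are `p a + 1` and `p a - 1`. Jumps of
size at most one force `p a = c`, so `p + 1_J` jumps up by one at `a` and `p - 1_J` jumps down
by one. If `a ≤ 0` the downward jump contradicts monotonicity of `p - 1_J` on `(-∞, 0]`; if
`a > 0` the upward jump contradicts antitonicity of `p + 1_J` on `[0, ∞)`.
-/

open Filter Set Topology

theorem eventually_eq_leftLim_of_finite_discontinuities {β : Type*} [TopologicalSpace β]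
    [DiscreteTopology β] {f : ℝ → β} (hf : {x | ¬ ContinuousAt f x}.Finite) (a : ℝ) :
    ∀ᶠ x in 𝓝[<] a, f x = leftLim f a := by
  have hcont : ∀ᶠ x in 𝓝[<] a, ContinuousAt f x := by
    have hnhds : ({x | ¬ ContinuousAt f x} \ {a})ᶜ ∈ 𝓝 a :=
      hf.sdiff.isClosed.compl_mem_nhds fun h => h.2 rfl
    filter_upwards [nhdsWithin_le_nhds hnhds, self_mem_nhdsWithin] with x hx hxa
    by_contra h
    exact hx ⟨h, hxa.ne⟩
  obtain ⟨l, hla, hl⟩ := mem_nhdsLT_iff_exists_Ioo_subset.mp hcont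
  obtain ⟨x₀, hx₀⟩ := nonempty_Ioo.mpr (mem_Iio.mp hla)
  have hconst : ∀ᶠ x in 𝓝[<] a, f x = f x₀ :=
    eventually_of_mem (Ioo_mem_nhdsLT (mem_Iio.mp hla)) fun x hx =>
      isPreconnected_Ioo.constant (fun y hy => (hl hy).continuousWithinAt) hx hx₀
  rwa [leftLim_eq_of_tendsto (tendsto_const_nhds.congr' (hconst.mono fun _ hx => hx.symm))]

theorem ind_of_lt {a b x : ℝ} (hx : x < a) : ind a b x = 0 :=
  indicator_of_notMem (fun h : x ∈ Ico a b => hx.not_ge h.1) _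

theorem ind_self {a b : ℝ} (hab : a < b) : ind a b a = 1 :=
  indicator_of_mem (show a ∈ Ico a b from ⟨le_rfl, hab⟩) _

namespace IsRealPyramid

variable {f g : ℝ → ℕ} {a : ℝ}

theorem eventually_eq_leftLim (hf : IsRealPyramid f) (a : ℝ) :
    ∀ᶠ x in 𝓝[<] a, f x = leftLim f a :=
  eventually_eq_leftLim_of_finite_discontinuities hf.2.2.2.2.2.1 a

theorem leftLim_eq_of_eqOn (hf : IsRealPyramid f) (hg : IsRealPyramid g)
    (h : EqOn f g (Iio a)) : leftLim f a = leftLim g a := by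
  obtain ⟨x, ⟨hfx, hgx⟩, hxa⟩ :=
    ((hf.eventually_eq_leftLim a).and (hg.eventually_eq_leftLim a)).and
      self_mem_nhdsWithin |>.exists
  rw [← hfx, ← hgx, h hxa]

theorem le_leftLim_add_one (hf : IsRealPyramid f) (a : ℝ) : f a ≤ leftLim f a + 1 := by
  have := abs_le.mp (hf.2.2.2.2.2.2 a)
  omega

theorem leftLim_le_add_one (hf : IsRealPyramid f) (a : ℝ) : leftLim f a ≤ f a + 1 := by
  have := abs_le.mp (hf.2.2.2.2.2.2 a)
  omega

theorem leftLim_le_of_nonpos (hf : IsRealPyramid f) (ha : a ≤ 0) : leftLim f a ≤ f a := by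
  obtain ⟨x, hx, hxa⟩ := ((hf.eventually_eq_leftLim a).and self_mem_nhdsWithin).exists
  exact hx ▸ hf.2.2.1 hxa.le ha

theorem le_leftLim_of_pos (hf : IsRealPyramid f) (ha : 0 < a) : f a ≤ leftLim f a := by
  obtain ⟨x, hx, hxa⟩ := ((hf.eventually_eq_leftLim a).and (Ioo_mem_nhdsLT ha)).exists
  exact hx ▸ hf.2.2.2.1 hxa.1.le hxa.2.le

end IsRealPyramid

theorem not_addable_and_removable_general (p : ℝ → ℕ) (a b : ℝ) (hab : a < b) :
    ¬ (Addable p a b ∧ Removable p a b) := by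
  rintro ⟨hA, hpos, hR⟩
  have hlim : leftLim (fun x => p x - ind a b x) a = leftLim (fun x => p x + ind a b x) a :=
    hR.leftLim_eq_of_eqOn hA fun x hx => by simp [ind_of_lt (mem_Iio.mp hx)]
  have hpa : 1 ≤ p a := hpos a ⟨le_rfl, hab⟩
  have jumpA := hA.le_leftLim_add_one a
  have jumpR := hR.leftLim_le_add_one a
  simp only [ind_self hab, hlim] at jumpA jumpR
  rcases le_or_gt a 0 with ha | ha
  · have hmono := hR.leftLim_le_of_nonpos ha
    simp only [ind_self hab, hlim] at hmono
    omega
  · have hanti := hA.le_leftLim_of_pos ha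
    simp only [ind_self hab] at hanti
    omega

/-- no real interval is simultaneously addable and removable for a real
pyramid `p`. -/
theorem not_addable_and_removable (p : ℝ → ℕ) (hp : IsRealPyramid p) (a b : ℝ) (hab : a < b) :
    ¬ (Addable p a b ∧ Removable p a b) :=
  not_addable_and_removable_general p a b hab
end
end
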